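/- Let D be a finite database of finite labeled graphs and suppose the labeled graphs h and g' have transitive equivalent occurrence in D via a chain of one-edge extensions from h to g'; let ρ : h → g' be the composite inclusion subgraph isomorphism. Let F be the set of all subgraph isomorphisms of h into graphs of D and F' the set of all subgraph isomorphisms of g' into graphs of D. Then for every edge e of h, taking e' = ρ(e) ∈ E(g'), the set of edge images { f'(e') : f' ∈ F' } equals the set of edge images { f(e) : f ∈ F } (as sets of edges of the graphs of D). -/

import Mathlib

/-- A labeled graph: a finite simple graph with vertex and edge labels in `L`. -/
structure LabeledGraph (L : Type) : Type 1 where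
  V : Type
  fintypeV : Fintype V
  graph : SimpleGraph V
  vlabel : V → L
  elabel : Sym2 V → L

/-- A subgraph isomorphism from `g` to `g'`: an injective vertex map preserving
vertex labels, mapping edges to edges, and preserving edge labels. -/
structure SubgraphIso {L : Type} (g g' : LabeledGraph L) : Type where
  toFun : g.V → g'.V
  inj : Function.Injective toFun
  vlabel_eq : ∀ v, g'.vlabel (toFun v) = g.vlabel v
  map_adj : ∀ u v, g.graph.Adj u v → g'.graph.Adj (toFun u) (toFun v)
  elabel_eq : ∀ u v, g.graph.Adj u v → g'.elabel s(toFun u, toFun v) = g.elabel s(u, v)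

/-- The identity subgraph isomorphism. -/
def SubgraphIso.refl {L : Type} (g : LabeledGraph L) : SubgraphIso g g where
  toFun := id
  inj := fun _ _ h => h
  vlabel_eq := fun _ => rfl
  map_adj := fun _ _ h => h
  elabel_eq := fun _ _ _ => rfl

/-- Composition of subgraph isomorphisms. -/
def SubgraphIso.comp {L : Type} {g₁ g₂ g₃ : LabeledGraph L}
    (f : SubgraphIso g₁ g₂) (f' : SubgraphIso g₂ g₃) : SubgraphIso g₁ g₃ where
  toFun := f'.toFun ∘ f.toFun
  inj := f'.inj.comp f.inj
  vlabel_eq := fun v => by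
    simp only [Function.comp_apply, f'.vlabel_eq, f.vlabel_eq]
  map_adj := fun u v h => f'.map_adj _ _ (f.map_adj u v h)
  elabel_eq := fun u v h => by
    simp only [Function.comp_apply]
    rw [f'.elabel_eq _ _ (f.map_adj u v h), f.elabel_eq u v h]

/-- `g'` is a one-edge extension `g ⋄ e` of `g`: it comes with the inclusion
subgraph isomorphism `ρ : g → g'`, and `g'` consists of the image of `g`
plus exactly one new edge `e` (with at most one new endpoint vertex). -/
structure OneEdgeExtension {L : Type} (g g' : LabeledGraph L) : Type where
  ρ : SubgraphIso g g'
  e : Sym2 g'.V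
  e_mem : e ∈ g'.graph.edgeSet
  e_new : ∀ u v, g.graph.Adj u v → s(ρ.toFun u, ρ.toFun v) ≠ e
  edge_cover : ∀ u' v', g'.graph.Adj u' v' →
    s(u', v') = e ∨ ∃ u v, g.graph.Adj u v ∧ s(ρ.toFun u, ρ.toFun v) = s(u', v')
  vertex_cover : ∀ v' : g'.V, (∃ v, ρ.toFun v = v') ∨ v' ∈ e
  new_vertex_unique : ∀ v₁ v₂ : g'.V, v₁ ∈ e → v₂ ∈ e →
    (¬ ∃ v, ρ.toFun v = v₁) → (¬ ∃ v, ρ.toFun v = v₂) → v₁ = v₂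

/-- The occurrence `I(g, D)`: the total number of subgraph isomorphisms of `g`
into the graphs of the database `D`. -/
noncomputable def occurrence {L : Type} (g : LabeledGraph L) (D : List (LabeledGraph L)) : ℕ :=
  (D.map fun G => Nat.card (SubgraphIso g G)).sum

/-- A subgraph isomorphism `f` of `g` into `G` is extendable w.r.t.
`ρ : g → g'` if it lifts along `ρ` to a subgraph isomorphism of `g'` into `G`. -/
def IsExtendable {L : Type} {g g' G : LabeledGraph L}
    (ρ : SubgraphIso g g') (f : SubgraphIso g G) : Prop :=
  ∃ f' : SubgraphIso g' G, ∀ v, f.toFun v = f'.toFun (ρ.toFun v)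

/-- The extended occurrence `L(g, g', D)`: the total number of extendable
subgraph isomorphisms of `g` into the graphs of `D`, w.r.t. the one-edge
extension `g' = g ⋄ e`. -/
noncomputable def extendedOccurrence {L : Type} {g g' : LabeledGraph L}
    (ext : OneEdgeExtension g g') (D : List (LabeledGraph L)) : ℕ :=
  (D.map fun G => Nat.card {f : SubgraphIso g G // IsExtendable ext.ρ f}).sum

/-- `g` and its one-edge extension `g'` have equivalent occurrence in `D`. -/
def equivOccurrence {L : Type} {g g' : LabeledGraph L}
    (ext : OneEdgeExtension g g') (D : List (LabeledGraph L)) : Prop :=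
  occurrence g D = extendedOccurrence ext D

/-- The support of `g` in `D`: the number of graphs of `D` admitting at least
one subgraph isomorphism from `g`. -/
noncomputable def support {L : Type} (g : LabeledGraph L) (D : List (LabeledGraph L)) : ℕ :=
  Nat.card {i : Fin D.length // Nonempty (SubgraphIso g (D.get i))}

/-- `g` is frequent in `D` w.r.t. the threshold `min_sup`. -/
def Frequent {L : Type} (D : List (LabeledGraph L)) (min_sup : ℕ)
    (g : LabeledGraph L) : Prop :=
  min_sup ≤ support g D

/-- A frequent graph `g` is closed in `D` if no one-edge extension of `g` has
equivalent occurrence with `g`. -/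
def Closed {L : Type} (D : List (LabeledGraph L)) (min_sup : ℕ)
    (g : LabeledGraph L) : Prop :=
  Frequent D min_sup g ∧
    ∀ (g' : LabeledGraph L) (ext : OneEdgeExtension g g'), ¬ equivOccurrence ext D

/-- The composite inclusion subgraph isomorphism along a chain of one-edge
extensions. -/
def chainComp {L : Type} {gs : ℕ → LabeledGraph L} {n : ℕ}
    (ext : ∀ i, i < n → OneEdgeExtension (gs i) (gs (i + 1))) :
    ∀ i, i ≤ n → SubgraphIso (gs 0) (gs i)
  | 0, _ => SubgraphIso.refl _
  | i + 1, h => (chainComp ext i (Nat.le_of_succ_le h)).comp (ext i h).ρ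

/-- The number of edges of a labeled graph. -/
noncomputable def edgeCount {L : Type} (g : LabeledGraph L) : ℕ :=
  Nat.card g.graph.edgeSet

/-- `max_{G ∈ D} |E(G)|`. -/
noncomputable def maxEdgeCount {L : Type} (D : List (LabeledGraph L)) : ℕ :=
  (D.map edgeCount).foldr max 0

/-- The set of images of the edge `(u, v)` of `g` under all subgraph
isomorphisms of `g` into the graphs of `D`, recorded as pairs
(index of a graph in `D`, edge of that graph). -/
def edgeImages {L : Type} (D : List (LabeledGraph L)) (g : LabeledGraph L)
    (u v : g.V) : Set (Σ i : Fin D.length, Sym2 (D.get i).V) :=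
  { p | ∃ f : SubgraphIso g (D.get p.1), p.2 = s(f.toFun u, f.toFun v) }

lemma SubgraphIso.toFun_injective {L : Type} (g g' : LabeledGraph L) :
    Function.Injective (SubgraphIso.toFun (g := g) (g' := g')) := by
  rintro ⟨f, _, _, _, _⟩ ⟨f', _, _, _, _⟩ h
  simpa using h

instance SubgraphIso.finite {L : Type} (g g' : LabeledGraph L) :
    Finite (SubgraphIso g g') := by
  have := g.fintypeV
  have := g'.fintypeV
  exact Finite.of_injective _ (SubgraphIso.toFun_injective g g')

lemma list_map_sum_le {α : Type*} (l : List α) (f g : α → ℕ)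
    (h : ∀ a ∈ l, f a ≤ g a) : (l.map f).sum ≤ (l.map g).sum := by
  induction l with
  | nil => simp
  | cons b l ih =>
    simp only [List.map_cons, List.sum_cons]
    exact Nat.add_le_add (h b (by simp)) (ih fun a ha => h a (by simp [ha]))

lemma list_sum_eq_of_le {α : Type*} (l : List α) (f g : α → ℕ)
    (hle : ∀ a ∈ l, f a ≤ g a) (hsum : (l.map g).sum = (l.map f).sum) :
    ∀ a ∈ l, f a = g a := by
  induction l with
  | nil => simp
  | cons b l ih =>
    simp only [List.map_cons, List.sum_cons] at hsum
    have h1 : f b ≤ g b := hle b (by simp)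
    have h2 : (l.map f).sum ≤ (l.map g).sum :=
      list_map_sum_le l f g fun a ha => hle a (by simp [ha])
    intro a ha
    rcases List.mem_cons.mp ha with rfl | ha'
    · omega
    · exact ih (fun x hx => hle x (by simp [hx])) (by omega) a ha'

lemma all_extendable {L : Type} {g g' : LabeledGraph L}
    (ext : OneEdgeExtension g g') (D : List (LabeledGraph L))
    (h : equivOccurrence ext D) :
    ∀ G ∈ D, ∀ f : SubgraphIso g G, IsExtendable ext.ρ f := by
  intro G hG f
  unfold equivOccurrence occurrence extendedOccurrence at h
  have key := list_sum_eq_of_le D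
    (fun G => Nat.card {f : SubgraphIso g G // IsExtendable ext.ρ f})
    (fun G => Nat.card (SubgraphIso g G))
    (fun G _ => Nat.card_le_card_of_injective _ Subtype.val_injective)
    h G hG
  -- key : Nat.card subtype = Nat.card full
  have hset : {f : SubgraphIso g G | IsExtendable ext.ρ f} = Set.univ := by
    apply Set.eq_of_subset_of_ncard_le (Set.subset_univ _) _ (Set.finite_univ)
    rw [Set.ncard_univ, ← Nat.card_coe_set_eq]
    exact le_of_eq key.symm
  exact (Set.eq_univ_iff_forall.mp hset) f

/-- if `h = gs 0` and `g' = gs n` have transitive equivalent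
occurrence in `D` via a chain of one-edge extensions with composite inclusion
`ρ`, then for every edge `e = (u, v)` of `h`, the set of images of `e' = ρ(e)`
under subgraph isomorphisms of `g'` into `D` equals the set of images of `e`
under subgraph isomorphisms of `h` into `D`. -/
theorem transEquivOccurrence_edgeImages_eq {L : Type}
    (D : List (LabeledGraph L)) (n : ℕ) (gs : ℕ → LabeledGraph L)
    (ext : ∀ i, i < n → OneEdgeExtension (gs i) (gs (i + 1)))
    (heq : ∀ i (h : i < n), equivOccurrence (ext i h) D)
    (u v : (gs 0).V) (hadj : (gs 0).graph.Adj u v) :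
    edgeImages D (gs n) ((chainComp ext n le_rfl).toFun u)
        ((chainComp ext n le_rfl).toFun v)
      = edgeImages D (gs 0) u v := by
  have chain_extend : ∀ (G : LabeledGraph L), G ∈ D → ∀ (f : SubgraphIso (gs 0) G)
      (i : ℕ) (hi : i ≤ n), ∃ fi : SubgraphIso (gs i) G,
      ∀ w, f.toFun w = fi.toFun ((chainComp ext i hi).toFun w) := by
    intro G hG f i
    induction i with
    | zero => exact fun _ => ⟨f, fun w => rfl⟩
    | succ i ih =>
      intro hi
      obtain ⟨fi, hfi⟩ := ih (Nat.le_of_succ_le hi)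
      obtain ⟨f', hf'⟩ := all_extendable (ext i hi) D (heq i hi) G hG fi
      refine ⟨f', fun w => ?_⟩
      rw [hfi w, hf']
      rfl
  ext p
  constructor
  · rintro ⟨f', hf'⟩
    exact ⟨(chainComp ext n le_rfl).comp f', hf'⟩
  · rintro ⟨f, hf⟩
    obtain ⟨fn, hfn⟩ := chain_extend (D.get p.1) (D.get_mem _) f n le_rfl
    exact ⟨fn, by rw [hf, hfn u, hfn v]⟩
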